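/- arXiv:2003.07832 — 6 statements merged into one kernel-verified Lean document; each statement's English description precedes it below -/
import Mathlib

section
/- Let G ≤ Sym(X) be a subgroup that is closed in Sym(X). Then G is locally compact (with the subspace topology) if and only if there exists a finite subset Y ⊆ X whose pointwise stabilizer G_(Y) is compact. -/
/-!
`Sym(X)` is a topological group in which the pointwise stabilizers of finite sets form a basis
of closed neighbourhoods of `1`; intersecting with `G` gives such a basis in `G`. In a topological
group a single compact neighbourhood of `1` already forces local compactness, and conversely a
closed neighbourhood of `1` inside a compact one is compact.
-/

open Filter Topology

theorem locallyCompactSpace_iff_exists_isCompact_of_hasBasis_nhds_one {G ι : Type*}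
    [TopologicalSpace G] [Group G] [IsTopologicalGroup G] {p : ι → Prop} {s : ι → Set G}
    (hb : (𝓝 1).HasBasis p s) (hs : ∀ i, p i → IsClosed (s i)) :
    LocallyCompactSpace G ↔ ∃ i, p i ∧ IsCompact (s i) := by
  constructor
  · intro _
    obtain ⟨K, hKc, hK⟩ := exists_compact_mem_nhds (1 : G)
    obtain ⟨i, hi, hiK⟩ := hb.mem_iff.1 hK
    exact ⟨i, hi, hKc.of_isClosed_subset (hs i hi) hiK⟩
  · rintro ⟨i, hi, hc⟩
    exact hc.locallyCompactSpace_of_mem_nhds_of_group (hb.mem_of_mem hi)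

namespace Equiv.Perm

variable {X : Type*} [TopologicalSpace X] [TopologicalSpace (Perm X)]

theorem continuous_apply_of_isInducing (hP : IsInducing ((⇑) : Perm X → X → X)) (x : X) :
    Continuous fun g : Perm X => g x :=
  (continuous_apply x).comp hP.continuous

theorem isClosed_setOf_forall_apply_eq_self [T2Space X]
    (hP : IsInducing ((⇑) : Perm X → X → X)) (Y : Set X) :
    IsClosed {g : Perm X | ∀ y ∈ Y, g y = y} := by
  simp only [Set.ofPred_forall]
  exact isClosed_iInter fun y => isClosed_iInter fun _ =>
    isClosed_eq (continuous_apply_of_isInducing hP y) continuous_const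

variable [DiscreteTopology X]

theorem eventually_apply_eq_of_isInducing (hP : IsInducing ((⇑) : Perm X → X → X)) (g₀ : Perm X)
    (x : X) : ∀ᶠ g in 𝓝 g₀, g x = g₀ x :=
  ((IsLocallyConstant.iff_continuous _).2 (continuous_apply_of_isInducing hP x)).eventually_eq g₀

theorem isTopologicalGroup_of_isInducing (hP : IsInducing ((⇑) : Perm X → X → X)) :
    IsTopologicalGroup (Perm X) where
  continuous_mul := by
    refine hP.continuous_iff.2 <| continuous_pi fun x => continuous_iff_continuousAt.2 fun q => ?_
    have hq : ∀ᶠ p in 𝓝 q, p.1 (q.2 x) = p.1 (p.2 x) :=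
      (eventually_apply_eq_of_isInducing hP q.2 x |>.prod_inr_nhds q.1).mono
        fun p hp => congrArg p.1 hp.symm
    exact ((continuous_apply_of_isInducing hP (q.2 x)).comp continuous_fst).continuousAt.congr hq
  continuous_inv := by
    refine hP.continuous_iff.2 <| continuous_pi fun x => continuous_iff_continuousAt.2 fun g₀ => ?_
    have hg₀ : ∀ᶠ g in 𝓝 g₀, g₀⁻¹ x = g⁻¹ x :=
      (eventually_apply_eq_of_isInducing hP g₀ (g₀⁻¹ x)).mono fun g hg => by
        rw [eq_inv_iff_eq, hg]; exact g₀.apply_symm_apply x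
    exact continuousAt_const.congr hg₀

theorem hasBasis_nhds_one_of_isInducing (hP : IsInducing ((⇑) : Perm X → X → X)) :
    (𝓝 (1 : Perm X)).HasBasis (fun _ => True)
      fun Y : Finset X => {g : Perm X | ∀ y ∈ Y, g y = y} := by
  rw [hP.nhds_eq_comap, nhds_pi]
  simp only [nhds_discrete]
  refine ((hasBasis_pi_pure _).comap _).to_hasBasis ?_ ?_
  · intro Y hY
    exact ⟨hY.toFinset, trivial, by simp⟩
  · intro Y _
    exact ⟨Y, Y.finite_toSet, subset_rfl⟩

end Equiv.Perm

theorem Subgroup.locallyCompactSpace_iff_exists_isCompact_inter {G ι : Type*} [TopologicalSpace G]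
    [Group G] [IsTopologicalGroup G] (H : Subgroup G) {p : ι → Prop} {s : ι → Set G}
    (hb : (𝓝 1).HasBasis p s) (hs : ∀ i, p i → IsClosed (s i)) :
    LocallyCompactSpace H ↔ ∃ i, p i ∧ IsCompact ((H : Set G) ∩ s i) := by
  have hbH : (𝓝 (1 : H)).HasBasis p fun i => (↑) ⁻¹' s i := by
    rw [nhds_subtype]
    exact hb.comap _
  rw [locallyCompactSpace_iff_exists_isCompact_of_hasBasis_nhds_one hbH
    fun i hi => (hs i hi).preimage continuous_subtype_val]
  simp only [Subtype.isCompact_iff, Set.image_preimage_eq_inter_range,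
    Subtype.range_coe_subtype, SetLike.setOfPred_mem_eq, Set.inter_comm]

/-- Let `G ≤ Sym(X)` be a subgroup that is closed in `Sym(X)`. Then `G` is
locally compact (with the subspace topology) if and only if there exists a finite subset
`Y ⊆ X` whose pointwise stabilizer `G_(Y)` is compact. -/
theorem statement5 (X : Type*) :
    letI : TopologicalSpace X := ⊥
    letI : TopologicalSpace (Equiv.Perm X) :=
      TopologicalSpace.induced (fun g => (g : X → X)) Pi.topologicalSpace
    ∀ G : Subgroup (Equiv.Perm X), IsClosed (G : Set (Equiv.Perm X)) →
      (LocallyCompactSpace G ↔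
        ∃ Y : Finset X,
          IsCompact {g : Equiv.Perm X | g ∈ G ∧ ∀ y ∈ Y, g y = y}) := by
  let : TopologicalSpace X := ⊥
  have : DiscreteTopology X := ⟨rfl⟩
  let : TopologicalSpace (Equiv.Perm X) :=
    TopologicalSpace.induced (fun g => (g : X → X)) Pi.topologicalSpace
  intro G _
  have hP : IsInducing ((⇑) : Equiv.Perm X → X → X) := ⟨rfl⟩
  have := Equiv.Perm.isTopologicalGroup_of_isInducing hP
  rw [G.locallyCompactSpace_iff_exists_isCompact_inter
    (Equiv.Perm.hasBasis_nhds_one_of_isInducing hP)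
    fun Y _ => Equiv.Perm.isClosed_setOf_forall_apply_eq_self hP Y]
  simp only [true_and]
  rfl
end

section
/- (Higman's primitivity criterion.) Let G be a group acting transitively on a set X. Then the action of G on X is primitive (i.e. preprimitive: every block of the action is a trivial block) if and only if for every pair of distinct points x, y ∈ X, the orbital graph of (x, y) is weakly connected; that is, for all a, b ∈ X, the pair (a, b) lies in the reflexive-transitive closure of the symmetric relation R on X defined by: u R v if and only if there exists g ∈ G with (g·x, g·y) = (u, v) or (g·x, g·y) = (v, u). -/
/-!
For `x ≠ y`, the connected component of `x` in the orbital graph of `(x, y)` is a block (the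
graph is `G`-invariant) containing two points, so primitivity forces it to be everything.
Conversely, if a block `B` contains `x ≠ y`, then an edge `(g • x, g • y)` of the orbital graph
leaving `B` meets `g • B` as well as `B`, so `g • B = B` and the edge stays inside `B`; by
connectedness `B` is everything.
-/

open Pointwise Relation

namespace MulAction

variable {G X : Type*} [Group G] [MulAction G X]

section InvariantRelation

variable {R : X → X → Prop}

theorem smul_rel_smul_iff (hR : ∀ (g : G) u v, R u v → R (g • u) (g • v)) (g : G) {u v : X} :
    R (g • u) (g • v) ↔ R u v :=
  ⟨fun h ↦ by simpa using hR g⁻¹ _ _ h, hR g u v⟩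

theorem isBlock_setOf_rel [Std.Symm R] [IsTrans X R]
    (hR : ∀ (g : G) u v, R u v → R (g • u) (g • v)) (x : X) : IsBlock G {v | R x v} := by
  refine isBlock_iff_smul_eq_of_mem.mpr fun g a ha hga ↦ ?_
  have hx : R x (g • x) := _root_.trans hga (symm (hR g x a ha))
  ext v
  rw [Set.mem_smul_set_iff_inv_smul_mem, Set.mem_ofPred, Set.mem_ofPred,
    ← smul_rel_smul_iff hR g, smul_inv_smul]
  exact ⟨_root_.trans hx, _root_.trans (symm hx)⟩

theorem reflTransGen_smul (hR : ∀ (g : G) u v, R u v → R (g • u) (g • v)) (g : G) {u v : X}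
    (h : ReflTransGen R u v) : ReflTransGen R (g • u) (g • v) :=
  ReflTransGen.lift (g • ·) (hR g) u v h

end InvariantRelation

variable (G) in
def OrbitalAdj (x y u v : X) : Prop :=
  ∃ g : G, (g • x = u ∧ g • y = v) ∨ (g • x = v ∧ g • y = u)

namespace OrbitalAdj

instance (x y : X) : Std.Symm (OrbitalAdj G x y) where
  symm _ _ := fun ⟨g, h⟩ ↦ ⟨g, h.symm⟩

theorem self (x y : X) : OrbitalAdj G x y x y :=
  ⟨1, .inl ⟨one_smul G x, one_smul G y⟩⟩

theorem smul {x y u v : X} (h : OrbitalAdj G x y u v) (g : G) :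
    OrbitalAdj G x y (g • u) (g • v) := by
  obtain ⟨k, ⟨rfl, rfl⟩ | ⟨rfl, rfl⟩⟩ := h
  exacts [⟨g * k, .inl ⟨mul_smul .., mul_smul ..⟩⟩, ⟨g * k, .inr ⟨mul_smul .., mul_smul ..⟩⟩]

end OrbitalAdj

theorem IsBlock.mem_of_orbitalAdj {B : Set X} (hB : IsBlock G B) {x y u v : X} (hx : x ∈ B)
    (hy : y ∈ B) (huv : OrbitalAdj G x y u v) (hu : u ∈ B) : v ∈ B := by
  obtain ⟨g, ⟨rfl, rfl⟩ | ⟨rfl, rfl⟩⟩ := huv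
  · exact hB.smul_eq_of_mem hx hu ▸ Set.smul_mem_smul_set hy
  · exact hB.smul_eq_of_mem hy hu ▸ Set.smul_mem_smul_set hx

theorem IsBlock.mem_of_reflTransGen_orbitalAdj {B : Set X} (hB : IsBlock G B) {x y u v : X}
    (hx : x ∈ B) (hy : y ∈ B) (huv : ReflTransGen (OrbitalAdj G x y) u v) (hu : u ∈ B) :
    v ∈ B := by
  induction huv with
  | refl => exact hu
  | tail _ hvw ih => exact hB.mem_of_orbitalAdj hx hy hvw ih

theorem forall_isTrivialBlock_iff_reflTransGen_orbitalAdj :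
    (∀ B : Set X, IsBlock G B → IsTrivialBlock B) ↔
      ∀ x y : X, x ≠ y → ∀ a b : X, ReflTransGen (OrbitalAdj G x y) a b := by
  constructor
  · intro htriv x y hxy a b
    have hblock : IsBlock G {v | ReflTransGen (OrbitalAdj G x y) x v} :=
      isBlock_setOf_rel (fun g _ _ ↦ reflTransGen_smul (fun g _ _ h ↦ OrbitalAdj.smul h g) g) x
    have hy : ReflTransGen (OrbitalAdj G x y) x y := .single (.self x y)
    obtain hsub | huniv := htriv _ hblock
    · exact absurd (hsub ReflTransGen.refl hy) hxy
    · have hconn (v : X) : ReflTransGen (OrbitalAdj G x y) x v := Set.eq_univ_iff_forall.mp huniv v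
      exact (symm (hconn a)).trans (hconn b)
  · intro hconn B hB
    refine or_iff_not_imp_left.mpr fun hnsub ↦ ?_
    obtain ⟨x, hx, y, hy, hxy⟩ := Set.not_subsingleton_iff.mp hnsub
    exact Set.eq_univ_of_forall fun b ↦
      hB.mem_of_reflTransGen_orbitalAdj hx hy (hconn x y hxy x b) hx

end MulAction

theorem statement6_general (G : Type*) [Group G] (X : Type*) [MulAction G X] :
    (∀ B : Set X, (∀ g : G, g • B = B ∨ g • B ∩ B = ∅) →
        (B.Subsingleton ∨ B = Set.univ)) ↔
      ∀ x y : X, x ≠ y → ∀ a b : X,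
        Relation.ReflTransGen
          (fun u v => ∃ g : G, (g • x = u ∧ g • y = v) ∨ (g • x = v ∧ g • y = u))
          a b := by
  simp only [← Set.disjoint_iff_inter_eq_empty, ← MulAction.isBlock_iff_smul_eq_or_disjoint]
  exact MulAction.forall_isTrivialBlock_iff_reflTransGen_orbitalAdj

/-- **Higman's primitivity criterion.** Let `G` act transitively on `X`. Then
the action is primitive (every block `B` — i.e. a set with `g • B = B` or `g • B ∩ B = ∅`
for each `g` — is trivial: empty, a singleton, or all of `X`) if and only if for every pair
of distinct points `x ≠ y`, the orbital graph of `(x, y)` is weakly connected: every two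
points `a, b` are joined by the reflexive-transitive closure of the symmetrisation of the
orbital `G • (x, y)`. -/
theorem statement6 (G : Type*) [Group G] (X : Type*) [MulAction G X]
    (htrans : MulAction.IsPretransitive G X) :
    (∀ B : Set X, (∀ g : G, g • B = B ∨ g • B ∩ B = ∅) →
        (B.Subsingleton ∨ B = Set.univ)) ↔
      ∀ x y : X, x ≠ y → ∀ a b : X,
        Relation.ReflTransGen
          (fun u v => ∃ g : G, (g • x = u ∧ g • y = v) ∨ (g • x = v ∧ g • y = u))
          a b :=
  statement6_general G X
end

section
/- Let G be a topological group, let Q ⊆ G be a compact subset such that the subgroup generated by Q is all of G, and let U be an open subgroup of G. Then there exist finitely many elements q₁, …, q_k ∈ Q such that G is generated (as a group) by the set {q₁, …, q_k} ∪ U. -/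
/-! The left cosets `qU`, `q ∈ Q`, are open and cover `Q`, so by compactness finitely many of them,
say those of `q₁, …, q_k`, already do. Then `Q ⊆ {q₁, …, q_k} * U`, so the subgroup generated by
`{q₁, …, q_k} ∪ U` contains `Q` and is therefore all of `G`. -/

open Pointwise

theorem IsCompact.exists_finset_subset_mul_of_isOpen {G : Type*} [Group G] [TopologicalSpace G]
    [ContinuousMul G] {K V : Set G} (hK : IsCompact K) (hV : IsOpen V) (hV₁ : (1 : G) ∈ V) :
    ∃ s : Finset G, (s : Set G) ⊆ K ∧ K ⊆ (s : Set G) * V := by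
  obtain ⟨t, htK, htfin, hKt⟩ := hK.elim_finite_subcover_image (fun k _ => hV.smul k)
    fun k hk => Set.mem_iUnion₂.2 ⟨k, hk, 1, hV₁, mul_one k⟩
  refine ⟨htfin.toFinset, by simpa using htK, ?_⟩
  simpa only [htfin.coe_toFinset] using hKt.trans_eq Set.iUnion_mul_left_image

theorem Subgroup.closure_le_closure_union_of_subset_mul {G : Type*} [Group G] {S A B : Set G}
    (h : S ⊆ A * B) : Subgroup.closure S ≤ Subgroup.closure (A ∪ B) :=
  calc Subgroup.closure S ≤ Subgroup.closure (A * B) := Subgroup.closure_mono h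
    _ ≤ Subgroup.closure A ⊔ Subgroup.closure B := Subgroup.closure_mul_le A B
    _ = Subgroup.closure (A ∪ B) := (Subgroup.closure_union A B).symm

/-- Let `G` be a topological group, `Q ⊆ G` a compact subset generating `G`
as a group, and `U` an open subgroup of `G`. Then there exist finitely many elements
`q₁, …, q_k ∈ Q` such that `G` is generated by `{q₁, …, q_k} ∪ U`. -/
theorem statement8 (G : Type*) [Group G] [TopologicalSpace G] [IsTopologicalGroup G]
    (Q : Set G) (hQ : IsCompact Q) (hgen : Subgroup.closure Q = ⊤)
    (U : Subgroup G) (hU : IsOpen (U : Set G)) :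
    ∃ s : Finset G, (s : Set G) ⊆ Q ∧
      Subgroup.closure ((s : Set G) ∪ (U : Set G)) = ⊤ := by
  obtain ⟨s, hsQ, hQs⟩ := hQ.exists_finset_subset_mul_of_isOpen hU U.one_mem
  refine ⟨s, hsQ, eq_top_iff.2 ?_⟩
  exact hgen ▸ Subgroup.closure_le_closure_union_of_subset_mul hQs
end

section
/- Let G be a group acting faithfully and primitively (preprimitively, in particular transitively) on a set X, and assume the action is not regular, i.e. there exist x ∈ X and g ∈ G with g ≠ 1 and g·x = x (some point stabilizer is nontrivial). Then for any two distinct points x, y ∈ X there exists g ∈ G such that g·x = x and g·y ≠ y. -/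
open Pointwise

/-- Let `G` act faithfully and primitively on `X` (transitively, and every
block `B` — a set with `g • B = B` or `g • B ∩ B = ∅` for each `g` — is trivial), and assume
the action is not regular (some point stabilizer is nontrivial). Then for any two distinct
points `x ≠ y` there exists `g ∈ G` with `g • x = x` and `g • y ≠ y`. -/
theorem statement10 (G : Type*) [Group G] (X : Type*) [MulAction G X]
    [FaithfulSMul G X]
    (htrans : MulAction.IsPretransitive G X)
    (hblocks : ∀ B : Set X, (∀ g : G, g • B = B ∨ g • B ∩ B = ∅) →
        (B.Subsingleton ∨ B = Set.univ))
    (hnonreg : ∃ (x : X) (g : G), g ≠ 1 ∧ g • x = x) :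
    ∀ x y : X, x ≠ y → ∃ g : G, g • x = x ∧ g • y ≠ y := by
  intro x y hxy
  by_contra hcon
  push_neg at hcon
  -- hcon : ∀ g, g • x = x → g • y = y, i.e. Stab x ≤ Stab y
  -- The orbit of x under Stab y is a block.
  set B : Set X := {z | ∃ h : G, h • y = y ∧ h • x = z} with hBdef
  have hxB : x ∈ B := ⟨1, one_smul _ _, one_smul _ _⟩
  have hsmulB : ∀ g : G, g • y = y → g • B = B := by
    intro g hgy
    ext w
    constructor
    · rintro hw
      obtain ⟨h, hy1, hx1⟩ := Set.mem_smul_set_iff_inv_smul_mem.mp hw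
      refine ⟨g * h, ?_, ?_⟩
      · rw [mul_smul, hy1, hgy]
      · rw [mul_smul, hx1, smul_inv_smul]
    · rintro ⟨h, hy1, hx1⟩
      refine Set.mem_smul_set_iff_inv_smul_mem.mpr ⟨g⁻¹ * h, ?_, ?_⟩
      · rw [mul_smul, hy1, inv_smul_eq_iff, hgy]
      · rw [mul_smul, hx1]
  have hblockB : ∀ g : G, g • B = B ∨ g • B ∩ B = ∅ := by
    intro g
    rcases Set.eq_empty_or_nonempty (g • B ∩ B) with h | ⟨z, hz1, hz2⟩
    · right; exact h
    · left
      obtain ⟨h1, hy1, hx1⟩ := Set.mem_smul_set_iff_inv_smul_mem.mp hz1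
      obtain ⟨h2, hy2, hx2⟩ := hz2
      have hk : (h2⁻¹ * g * h1) • x = x := by
        have h3 : g • (h1 • x) = h2 • x := by
          rw [hx1, hx2, smul_inv_smul]
        rw [mul_smul, mul_smul, h3, inv_smul_smul]
      have hky := hcon _ hk
      have hgy : g • y = y := by
        rw [mul_smul, mul_smul, hy1, inv_smul_eq_iff, hy2] at hky
        exact hky
      exact hsmulB g hgy
  rcases hblocks B hblockB with hsub | huniv
  · -- B is a singleton {x}, hence Stab x = Stab y
    have heq : ∀ g : G, g • x = x ↔ g • y = y := by
      intro g
      constructor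
      · exact hcon g
      · intro hgy
        exact hsub ⟨g, hgy, rfl⟩ hxB
    -- C = points with the same stabilizer as x is a block
    set C : Set X := {z | ∀ g : G, g • x = x ↔ g • z = z} with hCdef
    have hxC : x ∈ C := fun g => Iff.rfl
    have hyC : y ∈ C := heq
    have key : ∀ (g k : G) (v : X), k • v = v ↔ (g * k * g⁻¹) • (g • v) = g • v := by
      intro g k v
      rw [mul_smul, mul_smul, inv_smul_smul, smul_left_cancel_iff]
    have hmemgC : ∀ (g : G) (w : X),
        w ∈ g • C ↔ ∀ k : G, k • x = x ↔ (g * k * g⁻¹) • w = w := by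
      intro g w
      rw [Set.mem_smul_set_iff_inv_smul_mem]
      show (∀ k : G, k • x = x ↔ k • (g⁻¹ • w) = g⁻¹ • w) ↔ _
      apply forall_congr'
      intro k
      rw [key g k (g⁻¹ • w), smul_inv_smul]
    have hblockC : ∀ g : G, g • C = C ∨ g • C ∩ C = ∅ := by
      intro g
      rcases Set.eq_empty_or_nonempty (g • C ∩ C) with h | ⟨z, hz1, hz2⟩
      · right; exact h
      · left
        have hconj : ∀ k : G, k • x = x ↔ (g * k * g⁻¹) • x = x := by
          intro k
          rw [(hmemgC g z).mp hz1 k, hz2 (g * k * g⁻¹)]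
        ext w
        rw [hmemgC g w]
        constructor
        · intro hw k
          have h1 := hconj (g⁻¹ * k * g)
          have h2 := hw (g⁻¹ * k * g)
          have e : g * (g⁻¹ * k * g) * g⁻¹ = k := by group
          rw [e] at h1 h2
          exact h1.symm.trans h2
        · intro hw k
          exact (hconj k).trans (hw (g * k * g⁻¹))
    rcases hblocks C hblockC with hsubC | hunivC
    · exact hxy (hsubC hxC hyC)
    · -- all points have the same stabilizer as x; faithfulness kills hnonreg
      obtain ⟨x₀, g₀, hg₀ne, hg₀fix⟩ := hnonreg
      have hx₀C : x₀ ∈ C := hunivC ▸ Set.mem_univ x₀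
      have hg₀x : g₀ • x = x := (hx₀C g₀).mpr hg₀fix
      have : g₀ = 1 := by
        apply eq_of_smul_eq_smul (M := G) (α := X)
        intro z
        have hzC : z ∈ C := hunivC ▸ Set.mem_univ z
        rw [(hzC g₀).mp hg₀x, one_smul]
      exact hg₀ne this
  · -- B = univ : every g fixes y, contradicting transitivity
    obtain ⟨g, hg⟩ := htrans.exists_smul_eq y x
    have : g • x ∈ B := huniv ▸ Set.mem_univ _
    obtain ⟨h, hy1, hx1⟩ := this
    have hk : (h⁻¹ * g) • x = x := by
      rw [mul_smul, ← hx1, inv_smul_smul]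
    have := hcon _ hk
    rw [mul_smul, inv_smul_eq_iff, hy1] at this
    rw [this] at hg
    exact hxy hg.symm
end

section
/- Under these hypotheses, G is generated by the point stabilizers of its action on G/H: the subgroup of G generated by the union over all x ∈ G/H of the stabilizers Stab_G(x) equals G. -/
/-- Let `G = A ⋊ ⟨t⟩` where `A` is an infinite commutative subgroup of odd
finite exponent, `t² = 1`, `t ∉ A`, `G = A ∪ At`, and `t a t = a⁻¹` for all `a ∈ A`. Let
`H = ⟨t⟩` and let `G` act on `G/H` by left multiplication. Then `G` is generated by the
point stabilizers of this action. -/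
theorem statement13 (G : Type*) [Group G] (A : Subgroup G) (t : G)
    (hcomm : ∀ a ∈ A, ∀ b ∈ A, a * b = b * a)
    (hinf : (A : Set G).Infinite)
    (hexp : ∃ n : ℕ, Odd n ∧ 1 ≤ n ∧ ∀ a ∈ A, a ^ n = 1)
    (ht : t ^ 2 = 1) (htA : t ∉ A)
    (hcover : ∀ g : G, g ∈ A ∨ g * t ∈ A)
    (hinv : ∀ a ∈ A, t * a * t = a⁻¹) :
    Subgroup.closure
      (⋃ x : G ⧸ Subgroup.zpowers t, (MulAction.stabilizer G x : Set G)) = ⊤ := by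
  set S := Subgroup.closure
      (⋃ x : G ⧸ Subgroup.zpowers t, (MulAction.stabilizer G x : Set G)) with hS
  have htt : t * t = 1 := by rw [← sq]; exact ht
  -- all conjugates of t are in S
  have hconj : ∀ g : G, g * t * g⁻¹ ∈ S := by
    intro g
    apply Subgroup.subset_closure
    refine Set.mem_iUnion.2 ⟨QuotientGroup.mk g, ?_⟩
    show (QuotientGroup.mk (g * t * g⁻¹ * g) : G ⧸ Subgroup.zpowers t) = QuotientGroup.mk g
    rw [QuotientGroup.eq]
    have : (g * t * g⁻¹ * g)⁻¹ * g = t⁻¹ := by group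
    rw [this]
    exact (Subgroup.zpowers t).inv_mem (Subgroup.mem_zpowers t)
  have htS : t ∈ S := by simpa using hconj 1
  -- a² ∈ S for all a ∈ A
  have hsq : ∀ a ∈ A, a ^ 2 ∈ S := by
    intro a ha
    have h1 : t * a⁻¹ * t = a := by
      have := hinv a⁻¹ (A.inv_mem ha); simpa using this
    have e : a * (t * a⁻¹ * t) * t = a * t * a⁻¹ * (t * t) := by group
    rw [h1, htt, mul_one] at e
    have h2 : a * t * a⁻¹ = a ^ 2 * t := by rw [sq]; exact e.symm
    have := S.mul_mem (hconj a) htS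
    rw [h2] at this
    rwa [mul_assoc, htt, mul_one] at this
  -- all of A is in S
  have hA : ∀ a ∈ A, a ∈ S := by
    intro a ha
    obtain ⟨n, hodd, hn1, hord⟩ := hexp
    obtain ⟨k, hk⟩ := hodd
    have : a = (a ^ (k + 1)) ^ 2 := by
      rw [← pow_mul]
      have : (k + 1) * 2 = n + 1 := by omega
      rw [this, pow_succ, hord a ha, one_mul]
    rw [this]
    exact hsq _ (A.pow_mem ha _)
  rw [eq_top_iff]
  intro g _
  rcases hcover g with h | h
  · exact hA g h
  · have := S.mul_mem (hA _ h) htS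
    rwa [mul_assoc, htt, mul_one] at this
end

section
/- Under these hypotheses, G is not generated by finitely many point stabilizers of its action on G/H: for every finite collection of points x₁, …, x_k ∈ G/H, the subgroup of G generated by Stab_G(x₁) ∪ ⋯ ∪ Stab_G(x_k) is a proper subgroup of G (indeed, it is finite, while G is infinite). -/
/-- Let `G = A ⋊ ⟨t⟩` where `A` is an infinite commutative subgroup of odd
finite exponent, `t² = 1`, `t ∉ A`, `G = A ∪ At`, and `t a t = a⁻¹` for all `a ∈ A`. Let
`H = ⟨t⟩` and let `G` act on `G/H` by left multiplication. Then `G` is not generated by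
finitely many point stabilizers: for every finite collection of points of `G/H`, the
subgroup generated by their stabilizers is finite (while `G` is infinite), in particular a
proper subgroup of `G`. -/
theorem statement14 (G : Type*) [Group G] (A : Subgroup G) (t : G)
    (hcomm : ∀ a ∈ A, ∀ b ∈ A, a * b = b * a)
    (hinf : (A : Set G).Infinite)
    (hexp : ∃ n : ℕ, Odd n ∧ 1 ≤ n ∧ ∀ a ∈ A, a ^ n = 1)
    (ht : t ^ 2 = 1) (htA : t ∉ A)
    (hcover : ∀ g : G, g ∈ A ∨ g * t ∈ A)
    (hinv : ∀ a ∈ A, t * a * t = a⁻¹) :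
    ∀ s : Finset (G ⧸ Subgroup.zpowers t),
      (Subgroup.closure
          (⋃ x ∈ s, (MulAction.stabilizer G x : Set G)) ≠ ⊤) ∧
      ((Subgroup.closure
          (⋃ x ∈ s, (MulAction.stabilizer G x : Set G)) : Set G).Finite) ∧
      Infinite G := by
  classical
  intro s
  obtain ⟨n, hodd, hn1, hAexp⟩ := hexp
  have htt : t * t = 1 := by rw [← sq]; exact ht
  have htinv : t⁻¹ = t := inv_eq_of_mul_eq_one_left htt
  haveI hGinf : Infinite G := by
    haveI := hinf.to_subtype
    exact Infinite.of_injective ((↑) : A → G) Subtype.coe_injective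
  -- key conjugation computation
  have key : ∀ g : G, g * t * g⁻¹ * t ∈ A := by
    intro g
    rcases hcover g with hg | hg
    · have hg' : g⁻¹ ∈ A := A.inv_mem hg
      have e1 : g * t * g⁻¹ * t = g * (t * g⁻¹ * t) := by group
      rw [e1, hinv g⁻¹ hg', inv_inv]
      exact A.mul_mem hg hg
    · have hbinv : (g * t)⁻¹ ∈ A := A.inv_mem hg
      have e1 : g * t * g⁻¹ * t = (g * t) * (t * (g * t)⁻¹ * t) := by group
      rw [e1, hinv _ hbinv, inv_inv]
      exact A.mul_mem hg hg
  letI : CommGroup ↥A :=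
    { (inferInstance : Group ↥A) with
      mul_comm := fun a b => Subtype.ext (hcomm a a.2 b b.2) }
  set u : G ⧸ Subgroup.zpowers t → G := fun x => x.out * t * x.out⁻¹ with hu
  have hv : ∀ x, u x * t ∈ A := fun x => key _
  set w : G ⧸ Subgroup.zpowers t → ↥A := fun x => ⟨u x * t, hv x⟩ with hw
  set T : Set ↥A := ↑(s.image w) with hT
  set B' : Subgroup ↥A := Subgroup.closure T with hB'
  haveI : Finite ↥T := by rw [hT]; infer_instance
  haveI hfgB : Group.FG ↥B' := Group.closure_finite_fg T
  have htorA : Monoid.IsTorsion ↥A := fun a =>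
    isOfFinOrder_iff_pow_eq_one.mpr
      ⟨n, hn1, Subtype.ext (by rw [SubmonoidClass.coe_pow]; exact hAexp a a.2)⟩
  haveI hfinB' : Finite ↥B' := CommGroup.finite_of_fg_torsion ↥B' (IsTorsion.subgroup htorA B')
  set B : Subgroup G := B'.map A.subtype with hBdef
  have hBfin : (B : Set G).Finite := by
    rw [hBdef, Subgroup.coe_map]
    exact (Set.toFinite (B' : Set ↥A)).image _
  have hBA : ∀ b ∈ B, b ∈ A := by
    rintro b hb
    rw [hBdef] at hb
    obtain ⟨a, _, rfl⟩ := hb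
    exact a.2
  -- the candidate finite subgroup K = B ∪ B·t
  set K : Subgroup G :=
    { carrier := ↑B ∪ (fun b => b * t) '' ↑B
      one_mem' := Or.inl B.one_mem
      mul_mem' := by
        rintro p q (hp | ⟨b, hb, rfl⟩) (hq | ⟨c, hc, rfl⟩)
        · exact Or.inl (B.mul_mem hp hq)
        · exact Or.inr ⟨p * c, B.mul_mem hp hc, by group⟩
        · refine Or.inr ⟨b * q⁻¹, B.mul_mem hb (B.inv_mem hq), ?_⟩
          have hq' := hinv q (hBA q hq)
          calc b * q⁻¹ * t = b * (t * q * t) * t := by rw [hq']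
            _ = b * t * q * (t * t) := by group
            _ = b * t * q := by rw [htt, mul_one]
        · refine Or.inl ?_
          have e : b * t * (c * t) = b * c⁻¹ := by
            calc b * t * (c * t) = b * (t * c * t) := by group
              _ = b * c⁻¹ := by rw [hinv c (hBA c hc)]
          rw [e]
          exact B.mul_mem hb (B.inv_mem hc)
      inv_mem' := by
        rintro p (hp | ⟨b, hb, rfl⟩)
        · exact Or.inl (B.inv_mem hp)
        · refine Or.inr ⟨b, hb, ?_⟩
          have h1 : t * b⁻¹ * t = b := by
            rw [hinv b⁻¹ (A.inv_mem (hBA b hb)), inv_inv]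
          calc b * t = (t * b⁻¹ * t) * t := by rw [h1]
            _ = t * b⁻¹ * (t * t) := by group
            _ = t * b⁻¹ := by rw [htt, mul_one]
            _ = t⁻¹ * b⁻¹ := by rw [htinv]
            _ = (b * t)⁻¹ := by group } with hK
  -- every z in zpowers t is 1 or t
  have hz : ∀ z ∈ Subgroup.zpowers t, z = 1 ∨ z = t := by
    rintro z ⟨k, rfl⟩
    show t ^ k = 1 ∨ t ^ k = t
    have ht2 : (t : G) ^ (2 : ℤ) = 1 := by
      rw [show (2 : ℤ) = ((2 : ℕ) : ℤ) from rfl, zpow_natCast, ht]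
    rcases Int.even_or_odd k with ⟨m, hm⟩ | ⟨m, hm⟩
    · left
      rw [hm, ← two_mul, zpow_mul, ht2, one_zpow]
    · right
      rw [hm, zpow_add, zpow_mul, ht2, one_zpow, one_mul, zpow_one]
  -- closure of the stabilizers is contained in K
  have hSK : Subgroup.closure (⋃ x ∈ s, (MulAction.stabilizer G x : Set G)) ≤ K := by
    rw [Subgroup.closure_le]
    rintro h hh
    simp only [Set.mem_iUnion] at hh
    obtain ⟨x, hx, hstab⟩ := hh
    have hx' : h • x = x := hstab
    have hmk : ((h * x.out : G) : G ⧸ Subgroup.zpowers t) = (x.out : G ⧸ _) := by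
      rw [show ((h * x.out : G) : G ⧸ Subgroup.zpowers t) = h • ((x.out : G) : G ⧸ Subgroup.zpowers t) from rfl,
        QuotientGroup.out_eq', hx']
    rw [QuotientGroup.eq] at hmk
    rcases hz _ hmk with e | e
    · have h1 : h⁻¹ = 1 := by
        calc h⁻¹ = x.out * ((h * x.out)⁻¹ * x.out) * x.out⁻¹ := by group
          _ = x.out * 1 * x.out⁻¹ := by rw [e]
          _ = 1 := by group
      have : h = 1 := inv_eq_one.mp h1
      rw [this]
      exact Or.inl B.one_mem
    · have hh' : h = u x := by
        rw [hu]
        calc h = x.out * ((h * x.out)⁻¹ * x.out)⁻¹ * x.out⁻¹ := by group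
          _ = x.out * t⁻¹ * x.out⁻¹ := by rw [e]
          _ = x.out * t * x.out⁻¹ := by rw [htinv]
      refine Or.inr ⟨u x * t, ?_, ?_⟩
      · rw [hBdef]
        refine ⟨w x, Subgroup.subset_closure ?_, rfl⟩
        rw [hT]
        exact Finset.mem_coe.mpr (Finset.mem_image_of_mem w hx)
      · show u x * t * t = h
        rw [hh']
        calc u x * t * t = u x * (t * t) := by group
          _ = u x := by rw [htt, mul_one]
  have hKfin : (K : Set G).Finite := hBfin.union (hBfin.image _)
  have hfinS : ((Subgroup.closure
      (⋃ x ∈ s, (MulAction.stabilizer G x : Set G)) : Subgroup G) : Set G).Finite :=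
    hKfin.subset hSK
  refine ⟨?_, hfinS, hGinf⟩
  intro hEq
  rw [hEq, Subgroup.coe_top] at hfinS
  exact Set.infinite_univ hfinS
end
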